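/- arXiv:1603.09285 — 4 statements merged into one kernel-verified Lean document; each statement's English description precedes it below -/
import Mathlib

section
/- Fix a point z in the hyperbolic upper half-plane ℍ and a constant r > 0. Then, as R → ∞, the quantity (2·r·R/(R² − 1))·sinh(Metric.infDist z ℓ_R) tends to r / Im z. (This identifies the limiting ‘focus/directrix circle’ condition sinh(dist z i) = ε_R·sinh(d(z, ℓ_R)) with ε_R = 2rR/(R²−1) as the equation sinh(dist z i) = r/Im z.) -/
open UpperHalfPlane

/-- The geodesic `ℓ_R = {u ∈ ℍ : |u| = R}` in the upper half-plane. -/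
noncomputable def ell (R : ℝ) : Set ℍ := {u : ℍ | ‖(u : ℂ)‖ = R}

/-- The point `t·i` of the upper half-plane, for `t > 0`. -/
noncomputable def vpt (t : ℝ) (ht : 0 < t) : ℍ :=
  UpperHalfPlane.mk (t * Complex.I) (by simpa using ht)

/-! For `u = a + iv` on `ℓ_R` and `z = x + iy`, a polynomial identity (using `a² + v² = R²`)
gives `sinh² d(z, u) = ((R² - |z|²) / (2Ry))² + ((a(|z|² + R²) - 2R²x) / (2Ryv))²`.
The second square vanishes at the point of `ℓ_R` with `a = 2R²x / (|z|² + R²)`, so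
`sinh d(z, ℓ_R) = |R² - |z|²| / (2Ry)`, and the quantity of the theorem is
`(r / y) (R² - |z|²) / (R² - 1)` for large `R`. -/

open Filter Topology

lemma mem_ell_iff {R : ℝ} (hR : 0 ≤ R) (u : ℍ) :
    u ∈ ell R ↔ u.re ^ 2 + u.im ^ 2 = R ^ 2 := by
  rw [ell, Set.mem_ofPred_eq, ← sq_eq_sq₀ (norm_nonneg _) hR, Complex.sq_norm,
    Complex.normSq_apply, ← sq, ← sq, coe_re, coe_im]

lemma sinh_dist_sq_of_mem_ell {R : ℝ} (hR : 0 < R) (z : ℍ) {u : ℍ} (hu : u ∈ ell R) :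
    Real.sinh (dist z u) ^ 2 =
      ((R ^ 2 - (z.re ^ 2 + z.im ^ 2)) / (2 * R * z.im)) ^ 2 +
      ((u.re * (z.re ^ 2 + z.im ^ 2 + R ^ 2) - 2 * R ^ 2 * z.re) / (2 * R * z.im * u.im)) ^ 2 := by
  rw [mem_ell_iff hR.le] at hu
  have := z.im_pos
  have := u.im_pos
  rw [Real.sinh_sq, cosh_dist']
  field_simp
  linear_combination (R ^ 2 * ((z.re - u.re) ^ 2 + z.im ^ 2 + u.im ^ 2 +
      (z.re ^ 2 + z.im ^ 2 + R ^ 2 - 2 * u.re * z.re)) -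
    ((z.re ^ 2 + z.im ^ 2 + R ^ 2) ^ 2 - 4 * R ^ 2 * z.re ^ 2)) * hu

lemma abs_le_sinh_dist_of_mem_ell {R : ℝ} (hR : 0 < R) (z : ℍ) {u : ℍ} (hu : u ∈ ell R) :
    |(R ^ 2 - (z.re ^ 2 + z.im ^ 2)) / (2 * R * z.im)| ≤ Real.sinh (dist z u) :=
  abs_le_of_sq_le_sq
    (by rw [sinh_dist_sq_of_mem_ell hR z hu]; exact le_add_of_nonneg_right (sq_nonneg _))
    (Real.sinh_nonneg_iff.mpr dist_nonneg)

lemma exists_mem_ell_sinh_dist_eq {R : ℝ} (hR : 0 < R) (z : ℍ) :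
    ∃ u ∈ ell R, Real.sinh (dist z u) = |(R ^ 2 - (z.re ^ 2 + z.im ^ 2)) / (2 * R * z.im)| := by
  have hy := z.im_pos
  have hA : 0 < z.re ^ 2 + z.im ^ 2 + R ^ 2 := by positivity
  obtain ⟨a, haA⟩ : ∃ a, a * (z.re ^ 2 + z.im ^ 2 + R ^ 2) = 2 * R ^ 2 * z.re :=
    ⟨_, div_mul_cancel₀ _ hA.ne'⟩
  have ha : 0 < R ^ 2 - a ^ 2 := by
    have h : (z.re ^ 2 + z.im ^ 2 + R ^ 2) ^ 2 * (R ^ 2 - a ^ 2) =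
        R ^ 2 * ((z.re - R) ^ 2 + z.im ^ 2) * ((z.re + R) ^ 2 + z.im ^ 2) := by
      linear_combination (-(a * (z.re ^ 2 + z.im ^ 2 + R ^ 2) + 2 * R ^ 2 * z.re)) * haA
    have hpos : 0 < (z.re ^ 2 + z.im ^ 2 + R ^ 2) ^ 2 * (R ^ 2 - a ^ 2) := by
      rw [h]
      positivity
    exact pos_of_mul_pos_right hpos (sq_nonneg _)
  let u : ℍ := ⟨⟨a, √(R ^ 2 - a ^ 2)⟩, Real.sqrt_pos.mpr ha⟩
  have hu : u ∈ ell R := by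
    rw [mem_ell_iff hR.le]
    change a ^ 2 + √(R ^ 2 - a ^ 2) ^ 2 = R ^ 2
    rw [Real.sq_sqrt ha.le]
    ring
  refine ⟨u, hu, (sq_eq_sq₀ (Real.sinh_nonneg_iff.mpr dist_nonneg) (abs_nonneg _)).mp ?_⟩
  rw [sinh_dist_sq_of_mem_ell hR z hu, sq_abs, add_eq_left]
  change ((a * _ - _) / _) ^ 2 = 0
  rw [haA, sub_self, zero_div, zero_pow two_ne_zero]

theorem sinh_infDist_ell {R : ℝ} (hR : 0 < R) (z : ℍ) :
    Real.sinh (Metric.infDist z (ell R)) = |R ^ 2 - ‖(z : ℂ)‖ ^ 2| / (2 * R * z.im) := by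
  obtain ⟨u₀, hu₀, hsinh⟩ := exists_mem_ell_sinh_dist_eq hR z
  have hinf : Metric.infDist z (ell R) = dist z u₀ :=
    le_antisymm (Metric.infDist_le_dist_of_mem hu₀) <| Metric.le_infDist ⟨u₀, hu₀⟩ |>.mpr
      fun u hu => Real.sinh_le_sinh.mp (hsinh ▸ abs_le_sinh_dist_of_mem_ell hR z hu)
  have hy := z.im_pos
  rw [hinf, hsinh, abs_div, abs_of_pos (a := 2 * R * z.im) (by positivity), Complex.sq_norm,
    Complex.normSq_apply, coe_re, coe_im, ← sq, ← sq]

lemma tendsto_sq_sub_div_sq_sub_atTop (c d : ℝ) :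
    Tendsto (fun R : ℝ => (R ^ 2 - c) / (R ^ 2 - d)) atTop (𝓝 1) := by
  have hden : Tendsto (fun R : ℝ => R ^ 2 - d) atTop atTop := by
    simpa only [sub_eq_add_neg] using
      tendsto_atTop_add_const_right _ (-d) (tendsto_pow_atTop two_ne_zero)
  have h := (tendsto_const_nhds (x := d - c)).div_atTop hden |>.const_add 1
  rw [add_zero] at h
  refine h.congr' ?_
  filter_upwards [hden.eventually_gt_atTop 0] with R hR
  field_simp
  ring

theorem stmt4_general (z : ℍ) (r : ℝ) :
    Filter.Tendsto
      (fun R : ℝ => (2 * r * R / (R ^ 2 - 1)) * Real.sinh (Metric.infDist z (ell R)))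
      Filter.atTop (nhds (r / z.im)) := by
  have hlim := (tendsto_sq_sub_div_sq_sub_atTop (‖(z : ℂ)‖ ^ 2) 1).const_mul (r / z.im)
  rw [mul_one] at hlim
  refine hlim.congr' ?_
  filter_upwards [eventually_gt_atTop (max 1 ‖(z : ℂ)‖)] with R hR
  rw [max_lt_iff] at hR
  have hR0 : 0 < R := one_pos.trans hR.1
  have hR1 : R ^ 2 - 1 ≠ 0 := by nlinarith
  have hRz : 0 < R ^ 2 - ‖(z : ℂ)‖ ^ 2 :=
    sub_pos.mpr (pow_lt_pow_left₀ hR.2 (norm_nonneg _) two_ne_zero)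
  have hy := z.im_pos
  rw [sinh_infDist_ell hR0 z, abs_of_pos hRz]
  field_simp

/-- As `R → ∞`, `(2rR/(R²−1))·sinh(d(z, ℓ_R)) → r / Im z`. -/
theorem stmt4 (z : ℍ) (r : ℝ) (hr : 0 < r) :
    Filter.Tendsto
      (fun R : ℝ => (2 * r * R / (R ^ 2 - 1)) * Real.sinh (Metric.infDist z (ell R)))
      Filter.atTop (nhds (r / z.im)) :=
  stmt4_general z r
end

section
/- Let r > 1 and let ε satisfy 1/r < ε < 1. Then the focus/directrix ellipse {z ∈ ℍ : sinh(dist z i) = ε·sinh(Metric.infDist z ℓ_r)} with focus i and directrix ℓ_r is not a compact subset of ℍ (the curve runs off to the ideal boundary). -/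
open UpperHalfPlane

/-! The curve meets every horizontal line `Im z = y` with `0 < y < 1`, so `Im` has no positive
minimum on it. On such a line, at `x = 0` the focus term `sinh d(z, i) = (1 - y²)/(2y)` lies below
`ε sinh d(z, ℓ_r) ≥ ε (r² - y²)/(2ry)` because `εr > 1`; as `|x| → ∞` the focus term grows like
`x²/(2y)` and the directrix term at most like `ε x²/(2yr)`, which is smaller because `ε < r`.
The intermediate value theorem gives a point of the curve in between. -/

open Real ComplexConjugate

namespace UpperHalfPlane

theorem sinh_dist (z w : ℍ) :
    sinh (dist z w) = dist (z : ℂ) w * dist (z : ℂ) (conj (w : ℂ)) / (2 * z.im * w.im) := by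
  have hz := z.im_pos
  have hw := w.im_pos
  rw [← mul_div_cancel₀ (dist z w) two_ne_zero, sinh_two_mul, sinh_half_dist, cosh_half_dist]
  field_simp
  rw [sq_sqrt (by positivity)]
  ring

theorem sinh_dist_of_re_eq {z w : ℍ} (h : z.re = w.re) :
    sinh (dist z w) = |z.im ^ 2 - w.im ^ 2| / (2 * z.im * w.im) := by
  have hz := z.im_pos
  have hw := w.im_pos
  rw [sinh_dist, Complex.dist_of_re_eq h, Complex.dist_of_re_eq (by simpa using h)]
  simp only [Real.dist_eq, coe_im, Complex.conj_im, sub_neg_eq_add, abs_of_pos (add_pos hz hw)]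
  rw [show z.im ^ 2 - w.im ^ 2 = (z.im - w.im) * (z.im + w.im) by ring, abs_mul,
    abs_of_pos (add_pos hz hw)]

theorem sq_re_sub_div_le_sinh_dist (z w : ℍ) :
    (z.re - w.re) ^ 2 / (2 * z.im * w.im) ≤ sinh (dist z w) := by
  have hz := z.im_pos
  have hw := w.im_pos
  rw [sinh_dist]
  gcongr
  rw [sq, ← abs_mul_abs_self]
  have h1 : |z.re - w.re| ≤ dist (z : ℂ) w := by
    simpa [Complex.dist_eq] using Complex.abs_re_le_norm ((z : ℂ) - w)
  have h2 : |z.re - w.re| ≤ dist (z : ℂ) (conj (w : ℂ)) := by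
    simpa [Complex.dist_eq] using Complex.abs_re_le_norm ((z : ℂ) - conj (w : ℂ))
  exact mul_le_mul h1 h2 (abs_nonneg _) dist_nonneg

theorem abs_sq_norm_sub_div_le_sinh_dist (z w : ℍ) :
    |‖(z : ℂ)‖ ^ 2 - ‖(w : ℂ)‖ ^ 2| / (2 * ‖(w : ℂ)‖ * z.im) ≤ sinh (dist z w) := by
  have hz := z.im_pos
  have hw := w.im_pos
  have hw' : 0 < ‖(w : ℂ)‖ := norm_pos_iff.2 w.ne_zero
  -- `|z - w| |z - w̄| |w|` is the norm of a number whose imaginary part is `(|w|² - |z|²) Im w`.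
  have h_im : (((w : ℂ) - z) * (w - conj (z : ℂ)) * conj (w : ℂ)).im
      = (‖(w : ℂ)‖ ^ 2 - ‖(z : ℂ)‖ ^ 2) * w.im := by
    simp only [Complex.mul_im, Complex.mul_re, Complex.sub_re, Complex.sub_im, Complex.conj_re,
      Complex.conj_im, Complex.sq_norm, Complex.normSq_apply, coe_re, coe_im]
    ring
  have hnorm : ‖((w : ℂ) - z) * (w - conj (z : ℂ)) * conj (w : ℂ)‖
      = dist (z : ℂ) w * dist (z : ℂ) (conj (w : ℂ)) * ‖(w : ℂ)‖ := by
    have : ‖(w : ℂ) - conj (z : ℂ)‖ = dist (z : ℂ) (conj (w : ℂ)) := by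
      rw [← Complex.norm_conj, map_sub, Complex.conj_conj, ← dist_eq_norm, dist_comm]
    rw [norm_mul, norm_mul, Complex.norm_conj, this, ← dist_eq_norm, dist_comm]
  have key := Complex.abs_im_le_norm (((w : ℂ) - z) * (w - conj (z : ℂ)) * conj (w : ℂ))
  rw [h_im, hnorm, abs_mul, abs_of_pos hw, abs_sub_comm] at key
  rw [sinh_dist, div_le_div_iff₀ (by positivity) (by positivity)]
  nlinarith

end UpperHalfPlane

lemma vpt_mem_ell {R : ℝ} (hR : 0 < R) : vpt R hR ∈ ell R := by
  simp [ell, vpt, abs_of_pos hR]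

lemma abs_sq_norm_sub_div_le_sinh_infDist_ell (z : ℍ) {R : ℝ} (hR : 0 < R) :
    |‖(z : ℂ)‖ ^ 2 - R ^ 2| / (2 * R * z.im) ≤ sinh (Metric.infDist z (ell R)) := by
  have h : arsinh (|‖(z : ℂ)‖ ^ 2 - R ^ 2| / (2 * R * z.im)) ≤ Metric.infDist z (ell R) := by
    refine (Metric.le_infDist ⟨_, vpt_mem_ell hR⟩).2 fun w hw => ?_
    rw [← sinh_le_sinh, sinh_arsinh]
    simpa [show ‖(w : ℂ)‖ = R from hw] using abs_sq_norm_sub_div_le_sinh_dist z w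
  simpa using sinh_le_sinh.2 h

lemma sinh_infDist_ell_le (z : ℍ) {R : ℝ} (hR : 0 < R) :
    sinh (Metric.infDist z (ell R)) ≤ (z.re ^ 2 + z.im ^ 2 + R ^ 2) / (2 * z.im * R) :=
  calc sinh (Metric.infDist z (ell R))
      ≤ sinh (dist z (vpt R hR)) := sinh_le_sinh.2 (Metric.infDist_le_dist_of_mem (vpt_mem_ell hR))
    _ ≤ cosh (dist z (vpt R hR)) := (sinh_lt_cosh _).le
    _ = (z.re ^ 2 + z.im ^ 2 + R ^ 2) / (2 * z.im * R) := by simp [cosh_dist', vpt]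

lemma not_isCompact_of_forall_exists_im_lt {S : Set ℍ} (h : ∀ δ > 0, ∃ z ∈ S, z.im < δ) :
    ¬ IsCompact S := by
  intro hS
  obtain ⟨z₁, hz₁, -⟩ := h 1 one_pos
  obtain ⟨z₀, -, hmin⟩ := hS.exists_isMinOn ⟨z₁, hz₁⟩ continuous_im.continuousOn
  obtain ⟨z, hz, hlt⟩ := h z₀.im z₀.im_pos
  exact (hmin hz).not_gt hlt

lemma exists_im_eq_sinh_dist_I_eq_mul_sinh_infDist_ell {r ε y : ℝ} (hr : 1 < r)
    (hε1 : 1 / r < ε) (hε2 : ε < 1) (hy0 : 0 < y) (hy1 : y < 1) :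
    ∃ z : ℍ, z.im = y ∧ sinh (dist z I) = ε * sinh (Metric.infDist z (ell r)) := by
  have hr0 : 0 < r := by linarith
  have hε0 : 0 < ε := (one_div_pos.2 hr0).trans hε1
  have hεr : 1 ≤ ε * r := (div_lt_iff₀ hr0).1 hε1 |>.le
  let p : ℝ → ℍ := fun x => mk ⟨x, y⟩ hy0
  have hp : Continuous p := by
    have : ((↑) : ℍ → ℂ) ∘ p = fun x : ℝ => (x : ℂ) + y * Complex.I :=
      funext fun x => Complex.ext (by simp [p]) (by simp [p])
    rw [isEmbedding_coe.continuous_iff, this]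
    fun_prop
  have h_axis : sinh (dist (p 0) I) ≤ ε * sinh (Metric.infDist (p 0) (ell r)) :=
    calc sinh (dist (p 0) I) = (1 - y ^ 2) / (2 * y) := by
          rw [sinh_dist_of_re_eq (by simp [p]), show (p 0).im = y from rfl, I_im,
            abs_of_neg (by nlinarith)]
          ring
      _ ≤ ε * ((r ^ 2 - y ^ 2) / (2 * r * y)) := by
          have : r * (1 - y ^ 2) ≤ ε * (r ^ 2 - y ^ 2) := by
            nlinarith [mul_le_mul_of_nonneg_left hεr hr0.le, mul_le_mul_of_nonneg_right
              (show ε ≤ r by linarith) (sq_nonneg y)]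
          rw [mul_div_assoc', div_le_div_iff₀ (by positivity) (by positivity)]
          nlinarith
      _ ≤ ε * sinh (Metric.infDist (p 0) (ell r)) := by
          refine mul_le_mul_of_nonneg_left ?_ hε0.le
          simpa [p, Complex.sq_norm, Complex.normSq_apply, abs_sub_comm, ← sq,
            abs_of_pos (show 0 < r ^ 2 - y ^ 2 by nlinarith)]
            using abs_sq_norm_sub_div_le_sinh_infDist_ell (p 0) hr0
  have hrε : 0 < r - ε := by linarith
  set X := √(ε * (y ^ 2 + r ^ 2) / (r - ε))
  have hX : X ^ 2 * (r - ε) = ε * (y ^ 2 + r ^ 2) := by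
    rw [sq_sqrt (by positivity), div_mul_cancel₀ _ hrε.ne']
  have h_far : ε * sinh (Metric.infDist (p X) (ell r)) ≤ sinh (dist (p X) I) :=
    calc ε * sinh (Metric.infDist (p X) (ell r))
        ≤ ε * ((X ^ 2 + y ^ 2 + r ^ 2) / (2 * y * r)) := by
          refine mul_le_mul_of_nonneg_left ?_ hε0.le
          simpa [p] using sinh_infDist_ell_le (p X) hr0
      _ ≤ X ^ 2 / (2 * y) := by
          rw [mul_div_assoc', div_le_div_iff₀ (by positivity) (by positivity)]
          nlinarith
      _ ≤ sinh (dist (p X) I) := by simpa [p] using sq_re_sub_div_le_sinh_dist (p X) I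
  obtain ⟨x, hx⟩ := intermediate_value_univ₂ (continuous_sinh.comp (hp.dist continuous_const))
    (continuous_const.mul (continuous_sinh.comp ((Metric.continuous_infDist_pt _).comp hp)))
    h_axis h_far
  exact ⟨p x, rfl, hx⟩

/-- For `1/r < ε < 1` (with `r > 1`), the focus/directrix ellipse is not compact. -/
theorem stmt9 (r ε : ℝ) (hr : 1 < r) (hε1 : 1 / r < ε) (hε2 : ε < 1) :
    ¬ IsCompact
      {z : ℍ | Real.sinh (dist z UpperHalfPlane.I) = ε * Real.sinh (Metric.infDist z (ell r))} := by
  refine not_isCompact_of_forall_exists_im_lt fun δ hδ => ?_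
  obtain ⟨z, hz, hzS⟩ := exists_im_eq_sinh_dist_I_eq_mul_sinh_infDist_ell hr hε1 hε2
    (lt_min (half_pos hδ) one_half_pos) ((min_le_right _ _).trans_lt one_half_lt_one)
  exact ⟨z, hzS, hz ▸ (min_le_left _ _).trans_lt (half_lt_self hδ)⟩
end

section
/- For every r > 0 with r ≠ 1, the focus/directrix parabola {z ∈ ℍ : dist z i = Metric.infDist z ℓ_r} with focus i and directrix ℓ_r is not a compact subset of ℍ. -/
open UpperHalfPlane

/-!
On the horizontal line `Im z = ε`, the function `d(z, i) - d(z, ℓ_r)` is positive where the line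
crosses `ℓ_r`. Comparing `cosh d` turns `d(x + iε, i) ≤ d(x + iε, w)` into a polynomial inequality
in the coordinates of `w`, which for `ε ≤ 1` holds for every `w ∈ ℓ_r` at `x = 0` if `r > 1` and
at `x = 2 / (1 - r)` if `r < 1`. By the intermediate value theorem the parabola therefore meets
every line `Im z = ε` with `ε ≤ min 1 r`, and such points are at distance at least `-log ε`
from `i`, so the parabola is unbounded.
-/

open Real Metric

namespace UpperHalfPlane

lemma dist_coe_sq (z w : ℍ) : dist (z : ℂ) w ^ 2 = (z.re - w.re) ^ 2 + (z.im - w.im) ^ 2 := by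
  rw [Complex.dist_eq_re_im, sq_sqrt (by positivity)]
  rfl

lemma dist_le_dist_iff (z w z' w' : ℍ) :
    dist z w ≤ dist z' w' ↔
      dist (z : ℂ) w ^ 2 / (z.im * w.im) ≤ dist (z' : ℂ) w' ^ 2 / (z'.im * w'.im) := by
  rw [← abs_of_nonneg (dist_nonneg (x := z)), ← abs_of_nonneg (dist_nonneg (x := z')),
    ← cosh_le_cosh, cosh_dist, cosh_dist, add_le_add_iff_left, mul_assoc, mul_assoc,
    div_mul_eq_div_div_swap (b := 2), div_mul_eq_div_div_swap (b := 2),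
    div_le_div_iff_of_pos_right two_pos]

lemma continuous_vadd_const (z : ℍ) : Continuous fun x : ℝ ↦ x +ᵥ z := by
  simp only [isEmbedding_coe.continuous_iff, Function.comp_def, coe_vadd]
  fun_prop

lemma le_dist_I_of_im_le {z : ℍ} {t : ℝ} (h : z.im ≤ exp (-t)) : t ≤ dist z I := by
  have := im_div_exp_dist_le I z
  rw [I_im, one_div, ← exp_neg, dist_comm] at this
  exact neg_le_neg_iff.1 (exp_le_exp.1 (this.trans h))

end UpperHalfPlane

@[simp] lemma vpt_re (t : ℝ) (ht : 0 < t) : (vpt t ht).re = 0 := by simp [vpt]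

@[simp] lemma vpt_im (t : ℝ) (ht : 0 < t) : (vpt t ht).im = t := by simp [vpt]

lemma mem_ell_iff_s13 {r : ℝ} (hr : 0 ≤ r) {w : ℍ} : w ∈ ell r ↔ w.re ^ 2 + w.im ^ 2 = r ^ 2 := by
  change ‖(w : ℂ)‖ = r ↔ _
  rw [← sq_eq_sq₀ (norm_nonneg _) hr, Complex.sq_norm, Complex.normSq_apply, ← sq, ← sq]
  rfl

lemma vadd_vpt_mem_ell {r ε : ℝ} (hε : 0 < ε) (hεr : ε ≤ r) :
    √(r ^ 2 - ε ^ 2) +ᵥ vpt ε hε ∈ ell r := by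
  rw [mem_ell_iff_s13 (hε.le.trans hεr), vadd_re, vadd_im, vpt_re, vpt_im, add_zero,
    sq_sqrt (by nlinarith)]
  ring

lemma exists_eq_infDist_of_le_infDist {Y X : Type*} [TopologicalSpace Y] [PreconnectedSpace Y]
    [PseudoMetricSpace X] {γ : Y → X} (hγ : Continuous γ) {p : X} {s : Set X} {a b : Y}
    (ha : dist (γ a) p ≤ infDist (γ a) s) (hb : γ b ∈ s) :
    ∃ y, dist (γ y) p = infDist (γ y) s :=
  intermediate_value_univ₂ (hγ.dist continuous_const) ((continuous_infDist_pt s).comp hγ) ha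
    (b := b) (by simp only [infDist_zero_of_mem hb, dist_nonneg])

lemma exists_sq_add_sub_one_sq_mul_le {r ε : ℝ} (hr : 0 < r) (hr1 : r ≠ 1) (hε : ε ^ 2 ≤ 1) :
    ∃ x : ℝ, ∀ u v : ℝ, u ^ 2 + v ^ 2 = r ^ 2 → 0 < v →
      (x ^ 2 + (ε - 1) ^ 2) * v ≤ (x - u) ^ 2 + (ε - v) ^ 2 := by
  rcases hr1.lt_or_gt with hr1 | hr1
  · set x := 2 / (1 - r)
    have hx : x * (1 - r) = 2 := div_mul_cancel₀ _ (by linarith)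
    have hx0 : 0 ≤ x := div_nonneg zero_le_two (by linarith)
    refine ⟨x, fun u v huv hv => ?_⟩
    have hvr : v ≤ r := by nlinarith
    have hur : u ≤ r := by nlinarith
    nlinarith [mul_nonneg (sq_nonneg x) (sub_nonneg.2 hvr), mul_nonneg hx0 (sub_nonneg.2 hur),
      mul_nonneg (add_nonneg zero_le_one (sq_nonneg ε)) (sub_nonneg.2 hvr), congrArg (x * ·) hx]
  · refine ⟨0, fun u v huv hv => ?_⟩
    have hvr : v ≤ r := by nlinarith
    nlinarith [mul_nonneg (add_nonneg zero_le_one (sq_nonneg ε)) (sub_nonneg.2 hvr),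
      mul_nonneg (sub_nonneg.2 hr1.le) (by linarith : (0:ℝ) ≤ r - ε ^ 2)]

lemma exists_dist_I_le_infDist_ell {r ε : ℝ} (hr : 0 < r) (hr1 : r ≠ 1) (hε : 0 < ε)
    (hε1 : ε ≤ 1) : ∃ x : ℝ, dist (x +ᵥ vpt ε hε) I ≤ infDist (x +ᵥ vpt ε hε) (ell r) := by
  obtain ⟨x, hx⟩ := exists_sq_add_sub_one_sq_mul_le hr hr1 (pow_le_one₀ hε.le hε1)
  refine ⟨x, (le_infDist ⟨_, vadd_vpt_mem_ell hr le_rfl⟩).2 fun w hw => ?_⟩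
  have hxw := hx w.re w.im ((mem_ell_iff_s13 hr.le).1 hw) w.im_pos
  rw [dist_le_dist_iff, dist_coe_sq, dist_coe_sq, div_le_div_iff₀ (by positivity) (by positivity)]
  simp only [vadd_re, vpt_re, add_zero, I_re, sub_zero, vadd_im, vpt_im, I_im, mul_one]
  nlinarith [mul_le_mul_of_nonneg_left hxw hε.le]

lemma exists_im_eq_dist_I_eq_infDist_ell {r ε : ℝ} (hr : 0 < r) (hr1 : r ≠ 1) (hε : 0 < ε)
    (hε1 : ε ≤ 1) (hεr : ε ≤ r) : ∃ z : ℍ, z.im = ε ∧ dist z I = infDist z (ell r) := by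
  obtain ⟨a, ha⟩ := exists_dist_I_le_infDist_ell hr hr1 hε hε1
  obtain ⟨x, hx⟩ := exists_eq_infDist_of_le_infDist (continuous_vadd_const (vpt ε hε)) ha
    (vadd_vpt_mem_ell hε hεr)
  exact ⟨x +ᵥ vpt ε hε, by simp, hx⟩

/-- For `r ≠ 1`, the focus/directrix parabola is not compact. -/
theorem stmt13 (r : ℝ) (hr : 0 < r) (hr1 : r ≠ 1) :
    ¬ IsCompact {z : ℍ | dist z UpperHalfPlane.I = Metric.infDist z (ell r)} := by
  intro hK
  obtain ⟨C, hC⟩ := hK.isBounded.subset_closedBall I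
  set ε := min (min 1 r) (exp (-(C + 1)))
  have hε : 0 < ε := lt_min (lt_min one_pos hr) (exp_pos _)
  obtain ⟨z, hzε, hz⟩ := exists_im_eq_dist_I_eq_infDist_ell hr hr1 hε
    ((min_le_left _ _).trans (min_le_left _ _)) ((min_le_left _ _).trans (min_le_right _ _))
  have hfar : C + 1 ≤ dist z I := le_dist_I_of_im_le (hzε ▸ min_le_right _ _)
  have hnear : dist z I ≤ C := mem_closedBall.1 (hC hz)
  linarith
end

section
/- Let b > 1 and 0 < c < log b, and set r = √((−b + 2b²e^c − b·e^{2c}) / (b − 2e^c + b·e^{2c})) and ε = √(b·(−1 + 2b·e^c − e^{2c})·(b − 2e^c + b·e^{2c})) / (b·(e^{2c} − 1)). Then ε > 1, and the two-focus hyperbola equals the focus/directrix hyperbola with these parameters: {z ∈ ℍ : |dist z i − dist z (bi)| = c} = {z ∈ ℍ : sinh(dist z i) = ε·sinh(Metric.infDist z ℓ_r)}. -/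
/-!
Write `z = x + iy` and let `d₁, d₂` be its distances to the foci `i` and `bi`. Because
`c < log b = dist i (bi) ≤ d₁ + d₂`, the condition `|d₁ - d₂| = c` is equivalent to the vanishing of
`cosh² d₁ + cosh² d₂ + cosh² c - 2 cosh d₁ cosh d₂ cosh c - 1
  = (cosh (d₁ - d₂) - cosh c) (cosh (d₁ + d₂) - cosh c)`,
a rational function of `x² + y²` and `y`. The distance `δ` from `z` to `ℓ_r` satisfies
`sinh² δ = (x² + y² - r²)² / (2ry)²`, the nearest point of `ℓ_r` being found by Cauchy–Schwarz, so
the squared focus/directrix condition `sinh² d₁ = ε² sinh² δ` is rational in the same variables.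
For the given `r` and `ε` the two expressions agree up to the factor `sinh² c`.
-/

open UpperHalfPlane

open Real Metric

theorem abs_sub_eq_iff_cosh {d₁ d₂ c : ℝ} (hc : 0 ≤ c) (h : c < d₁ + d₂) :
    |d₁ - d₂| = c ↔
      cosh d₁ ^ 2 + cosh d₂ ^ 2 + cosh c ^ 2 - 2 * cosh d₁ * cosh d₂ * cosh c - 1 = 0 := by
  have hfactor :
      cosh d₁ ^ 2 + cosh d₂ ^ 2 + cosh c ^ 2 - 2 * cosh d₁ * cosh d₂ * cosh c - 1 =
        (cosh (d₁ - d₂) - cosh c) * (cosh (d₁ + d₂) - cosh c) := by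
    rw [cosh_sub, cosh_add]
    linear_combination sinh d₂ ^ 2 * sinh_sq d₁ + (cosh d₁ ^ 2 - 1) * sinh_sq d₂
  have hsum : cosh (d₁ + d₂) - cosh c ≠ 0 :=
    (sub_pos.2 (cosh_lt_cosh.2 (by rw [abs_of_nonneg hc]; exact h.trans_le (le_abs_self _)))).ne'
  rw [hfactor, mul_eq_zero, or_iff_left hsum, sub_eq_zero, ← abs_of_nonneg hc, cosh_abs c]
  exact ⟨fun h => by rw [← cosh_abs, h, cosh_abs],
    fun h => le_antisymm (cosh_le_cosh.1 h.le) (cosh_le_cosh.1 h.ge)⟩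

namespace UpperHalfPlane

variable {r : ℝ}

@[simp] theorem vpt_re (t : ℝ) (ht : 0 < t) : (vpt t ht).re = 0 := by simp [vpt]

@[simp] theorem vpt_im (t : ℝ) (ht : 0 < t) : (vpt t ht).im = t := by simp [vpt]

theorem dist_I_vpt {t : ℝ} (ht : 0 < t) : dist I (vpt t ht) = |log t| := by
  rw [dist_of_re_eq (by simp), I_im, vpt_im, log_one, Real.dist_eq, zero_sub, abs_neg]

theorem cosh_dist_I (z : ℍ) : cosh (dist z I) = (z.re ^ 2 + z.im ^ 2 + 1) / (2 * z.im) := by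
  rw [cosh_dist']
  simp

theorem cosh_dist_vpt (z : ℍ) {t : ℝ} (ht : 0 < t) :
    cosh (dist z (vpt t ht)) = (z.re ^ 2 + z.im ^ 2 + t ^ 2) / (2 * t * z.im) := by
  rw [cosh_dist']
  simp only [vpt_re, vpt_im, sub_zero]
  ring

theorem mem_ell_iff (hr : 0 ≤ r) {u : ℍ} : u ∈ ell r ↔ u.re ^ 2 + u.im ^ 2 = r ^ 2 := by
  rw [ell, Set.mem_ofPred_eq, ← pow_left_inj₀ (norm_nonneg _) hr two_ne_zero, Complex.sq_norm,
    Complex.normSq_apply, coe_re, coe_im, ← sq, ← sq]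

theorem cosh_dist_of_mem_ell (hr : 0 ≤ r) (z : ℍ) {u : ℍ} (hu : u ∈ ell r) :
    cosh (dist z u) = (z.re ^ 2 + z.im ^ 2 + r ^ 2 - 2 * z.re * u.re) / (2 * z.im * u.im) := by
  rw [cosh_dist', ← (mem_ell_iff hr).1 hu]
  ring_nf

theorem sq_two_mul_mul_re_lt (r : ℝ) (z : ℍ) :
    (2 * r * z.re) ^ 2 < (z.re ^ 2 + z.im ^ 2 + r ^ 2) ^ 2 := by
  have hfactor : (z.re ^ 2 + z.im ^ 2 + r ^ 2) ^ 2 - (2 * r * z.re) ^ 2 =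
      ((z.re - r) ^ 2 + z.im ^ 2) * ((z.re + r) ^ 2 + z.im ^ 2) := by ring
  have := z.im_pos
  exact sub_pos.1 (hfactor ▸ by positivity)

theorem le_cosh_dist_of_mem_ell (hr : 0 < r) (z : ℍ) {u : ℍ} (hu : u ∈ ell r) :
    √((z.re ^ 2 + z.im ^ 2 + r ^ 2) ^ 2 - (2 * r * z.re) ^ 2) / (2 * r * z.im) ≤
      cosh (dist z u) := by
  set A := z.re ^ 2 + z.im ^ 2 + r ^ 2
  set T := √(A ^ 2 - (2 * r * z.re) ^ 2)
  have hT : T ^ 2 = A ^ 2 - (2 * r * z.re) ^ 2 :=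
    sq_sqrt (sub_nonneg.2 (sq_two_mul_mul_re_lt r z).le)
  have hu' := (mem_ell_iff hr.le).1 hu
  have hy := z.im_pos
  have hq := u.im_pos
  -- Cauchy–Schwarz for `(2 r x, T)` and `(p, q)`, two vectors of lengths `A` and `r`.
  have hCS : 2 * r * z.re * u.re + T * u.im ≤ A * r := by
    refine (abs_le_of_sq_le_sq' ?_ (by positivity)).2
    nlinarith [sq_nonneg (2 * r * z.re * u.im - T * u.re)]
  rw [cosh_dist_of_mem_ell hr.le z hu, div_le_div_iff₀ (by positivity) (by positivity)]
  nlinarith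

theorem exists_mem_ell_cosh_dist_eq (hr : 0 < r) (z : ℍ) :
    ∃ u ∈ ell r, cosh (dist z u) =
      √((z.re ^ 2 + z.im ^ 2 + r ^ 2) ^ 2 - (2 * r * z.re) ^ 2) / (2 * r * z.im) := by
  set A := z.re ^ 2 + z.im ^ 2 + r ^ 2
  set T := √(A ^ 2 - (2 * r * z.re) ^ 2)
  have hA : 0 < A := by positivity
  have hT : T ^ 2 = A ^ 2 - (2 * r * z.re) ^ 2 :=
    sq_sqrt (sub_nonneg.2 (sq_two_mul_mul_re_lt r z).le)
  have hT0 : 0 < T := sqrt_pos.2 (sub_pos.2 (sq_two_mul_mul_re_lt r z))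
  -- the equality case of Cauchy–Schwarz: `(p, q)` proportional to `(2 r x, T)`
  let u : ℍ := ⟨⟨2 * r ^ 2 * z.re / A, r * T / A⟩, by positivity⟩
  have hu : u ∈ ell r := by
    rw [mem_ell_iff hr.le]
    change (2 * r ^ 2 * z.re / A) ^ 2 + (r * T / A) ^ 2 = r ^ 2
    field_simp
    linear_combination hT
  refine ⟨u, hu, ?_⟩
  rw [cosh_dist_of_mem_ell hr.le z hu]
  change (A - 2 * z.re * (2 * r ^ 2 * z.re / A)) / (2 * z.im * (r * T / A)) = _
  field_simp
  linear_combination -hT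

theorem cosh_infDist_ell (hr : 0 < r) (z : ℍ) :
    cosh (infDist z (ell r)) =
      √((z.re ^ 2 + z.im ^ 2 + r ^ 2) ^ 2 - (2 * r * z.re) ^ 2) / (2 * r * z.im) := by
  obtain ⟨u₀, hu₀, hcosh⟩ := exists_mem_ell_cosh_dist_eq hr z
  suffices infDist z (ell r) = dist z u₀ by rw [this, hcosh]
  refine le_antisymm (infDist_le_dist_of_mem hu₀) <|
    (le_infDist ⟨u₀, hu₀⟩).2 fun u hu => ?_
  have h := cosh_le_cosh.1 (hcosh ▸ le_cosh_dist_of_mem_ell hr z hu)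
  rwa [abs_of_nonneg dist_nonneg, abs_of_nonneg dist_nonneg] at h

theorem sinh_sq_infDist_ell (hr : 0 < r) (z : ℍ) :
    sinh (infDist z (ell r)) ^ 2 = (z.re ^ 2 + z.im ^ 2 - r ^ 2) ^ 2 / (2 * r * z.im) ^ 2 := by
  have := z.im_pos
  rw [sinh_sq, cosh_infDist_ell hr, div_pow,
    sq_sqrt (sub_nonneg.2 (sq_two_mul_mul_re_lt r z).le)]
  field_simp
  ring

end UpperHalfPlane

theorem directrix_denom_pos {b E : ℝ} (hb : 1 < b) : 0 < b - 2 * E + b * E ^ 2 := by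
  nlinarith [sq_nonneg (E - 1)]

section Parameters

variable {b E : ℝ} (hE : 1 < E) (hEb : E < b)
include hE hEb

theorem directrix_numer_pos : 0 < -1 + 2 * b * E - E ^ 2 := by
  nlinarith

theorem directrix_sq_pos : 0 < (-b + 2 * b ^ 2 * E - b * E ^ 2) / (b - 2 * E + b * E ^ 2) := by
  have := directrix_numer_pos hE hEb
  apply div_pos <;> nlinarith

theorem eccentricity_sq_num_pos :
    0 < b * (-1 + 2 * b * E - E ^ 2) * (b - 2 * E + b * E ^ 2) := by
  have := directrix_numer_pos hE hEb
  have := directrix_denom_pos (E := E) (hE.trans hEb)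
  have : 0 < b := by linarith
  positivity

theorem one_lt_eccentricity_sq :
    1 < b * (-1 + 2 * b * E - E ^ 2) * (b - 2 * E + b * E ^ 2) / (b * (E ^ 2 - 1)) ^ 2 := by
  have hb : 0 < b := by linarith
  have hM : 0 < E ^ 2 - 1 := by nlinarith
  have hfactor : b * (-1 + 2 * b * E - E ^ 2) * (b - 2 * E + b * E ^ 2) - (b * (E ^ 2 - 1)) ^ 2 =
      2 * b * (b * E - 1) * (1 + E ^ 2) * (b - E) := by ring
  rw [one_lt_div (by positivity), ← sub_pos, hfactor]
  have : 0 < b * E - 1 := by nlinarith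
  have : 0 < b - E := by linarith
  positivity

end Parameters

theorem twoFocus_poly_eq_sinh_sq_mul {b c r ε x y : ℝ} (hb : 1 < b) (hc : 0 < c) (hr : 0 < r)
    (hy : 0 < y)
    (hr2 : r ^ 2 = (-b + 2 * b ^ 2 * exp c - b * exp c ^ 2) / (b - 2 * exp c + b * exp c ^ 2))
    (hε2 : ε ^ 2 = b * (-1 + 2 * b * exp c - exp c ^ 2) * (b - 2 * exp c + b * exp c ^ 2) /
      (b * (exp c ^ 2 - 1)) ^ 2) :
    ((x ^ 2 + y ^ 2 + 1) / (2 * y)) ^ 2 + ((x ^ 2 + y ^ 2 + b ^ 2) / (2 * b * y)) ^ 2 +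
        cosh c ^ 2 - 2 * ((x ^ 2 + y ^ 2 + 1) / (2 * y)) * ((x ^ 2 + y ^ 2 + b ^ 2) / (2 * b * y)) *
        cosh c - 1 =
      sinh c ^ 2 * (ε ^ 2 * ((x ^ 2 + y ^ 2 - r ^ 2) ^ 2 / (2 * r * y) ^ 2) -
        (((x ^ 2 + y ^ 2 + 1) / (2 * y)) ^ 2 - 1)) := by
  have hE : 1 < exp c := one_lt_exp_iff.2 hc
  have hD : b - 2 * exp c + b * exp c ^ 2 ≠ 0 := (directrix_denom_pos hb).ne'
  have hM : exp c ^ 2 - 1 ≠ 0 := by nlinarith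
  have hN : -1 + 2 * b * exp c - exp c ^ 2 ≠ 0 := by
    intro h
    rw [show -b + 2 * b ^ 2 * exp c - b * exp c ^ 2 = b * (-1 + 2 * b * exp c - exp c ^ 2) by
      ring, h, mul_zero, zero_div] at hr2
    exact (pow_pos hr 2).ne' hr2
  have hE0 : exp c ≠ 0 := (exp_pos c).ne'
  rw [cosh_eq, sinh_eq, exp_neg, show (2 * r * y) ^ 2 = 4 * r ^ 2 * y ^ 2 by ring, hr2, hε2]
  field_simp
  ring

theorem abs_dist_sub_eq_iff_sinh_dist_eq_mul_sinh_infDist {b c r ε : ℝ} (hb : 1 < b)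
    (hc0 : 0 < c) (hc : c < log b) (hr : 0 < r) (hε : 0 ≤ ε)
    (hr2 : r ^ 2 = (-b + 2 * b ^ 2 * exp c - b * exp c ^ 2) / (b - 2 * exp c + b * exp c ^ 2))
    (hε2 : ε ^ 2 = b * (-1 + 2 * b * exp c - exp c ^ 2) * (b - 2 * exp c + b * exp c ^ 2) /
      (b * (exp c ^ 2 - 1)) ^ 2) (z : ℍ) :
    |dist z I - dist z (vpt b (by linarith))| = c ↔
      sinh (dist z I) = ε * sinh (infDist z (ell r)) := by
  have hb0 : 0 < b := by linarith
  have htri : c < dist z I + dist z (vpt b hb0) := by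
    refine hc.trans_le ?_
    rw [← abs_of_pos (log_pos hb), ← dist_I_vpt hb0]
    exact dist_triangle_left _ _ _
  rw [abs_sub_eq_iff_cosh hc0.le htri, cosh_dist_I, cosh_dist_vpt,
    ← pow_left_inj₀ (sinh_nonneg_iff.2 dist_nonneg)
      (mul_nonneg hε (sinh_nonneg_iff.2 infDist_nonneg)) two_ne_zero,
    mul_pow, sinh_sq_infDist_ell hr, sinh_sq, cosh_dist_I,
    twoFocus_poly_eq_sinh_sq_mul hb hc0 hr z.im_pos hr2 hε2, mul_eq_zero,
    or_iff_right (pow_ne_zero 2 (sinh_pos_iff.2 hc0).ne'), sub_eq_zero, eq_comm]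

/-- Every two-focus hyperbola is a focus/directrix hyperbola, with explicit directrix
radius `r` and eccentricity `ε > 1`. -/
theorem stmt17 (b c : ℝ) (hb : 1 < b) (hc0 : 0 < c) (hc : c < Real.log b) (r ε : ℝ)
    (hrdef : r = Real.sqrt ((-b + 2 * b ^ 2 * Real.exp c - b * Real.exp (2 * c)) /
        (b - 2 * Real.exp c + b * Real.exp (2 * c))))
    (hεdef : ε = Real.sqrt (b * (-1 + 2 * b * Real.exp c - Real.exp (2 * c)) *
        (b - 2 * Real.exp c + b * Real.exp (2 * c))) / (b * (Real.exp (2 * c) - 1))) :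
    1 < ε ∧
      {z : ℍ | |dist z UpperHalfPlane.I - dist z (vpt b (by linarith))| = c} =
        {z : ℍ | Real.sinh (dist z UpperHalfPlane.I) =
          ε * Real.sinh (Metric.infDist z (ell r))} := by
  have hE : 1 < exp c := one_lt_exp_iff.2 hc0
  have hEb : exp c < b := by rwa [← exp_lt_exp, exp_log (by linarith)] at hc
  rw [show exp (2 * c) = exp c ^ 2 by rw [two_mul, exp_add, sq]] at hrdef hεdef
  have hr2 := sq_sqrt (directrix_sq_pos hE hEb).le
  rw [← hrdef] at hr2
  have hε2 := congrArg (· ^ 2) hεdef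
  simp only [div_pow, sq_sqrt (eccentricity_sq_num_pos hE hEb).le] at hε2
  have hr : 0 < r := hrdef ▸ sqrt_pos.2 (directrix_sq_pos hE hEb)
  have hε : 0 ≤ ε :=
    hεdef ▸ div_nonneg (sqrt_nonneg _) (mul_nonneg (by linarith) (by nlinarith))
  refine ⟨(one_lt_sq_iff₀ hε).1 (hε2 ▸ one_lt_eccentricity_sq hE hEb),
    Set.ext fun z => ?_⟩
  exact abs_dist_sub_eq_iff_sinh_dist_eq_mul_sinh_infDist hb hc0 hc hr hε hr2 hε2 z
end
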